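/- arXiv:1902.05817 — 2 statements merged into one kernel-verified Lean document; each statement's English description precedes it below -/
import Mathlib

section
/- Let T be a triangulated category with coproducts and S a set of objects of T. Then Susp(S)^⊥ = S^{⊥_{≤0}} and Loc(S)^⊥ = S^{⊥_Z}. Consequently, Susp(S) ⊆ ^⊥(S^{⊥_{≤0}}) and Loc(S) ⊆ ^⊥(S^{⊥_Z}). -/
/-!
Common definitions for formalising "Partial silting objects and smashing subcategories"
by Angeleri Hügel, Marks, Vitória.
-/

namespace PaperSmashing

open CategoryTheory CategoryTheory.Limits CategoryTheory.Pretriangulated Opposite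

universe v u

variable (C : Type u) [Category.{v} C] [HasZeroObject C] [HasShift C ℤ] [Preadditive C]
  [∀ n : ℤ, (CategoryTheory.shiftFunctor C n).Additive] [Pretriangulated C]

variable {C}

/-- `X` is a retract (direct summand) of `Y`. -/
def IsRetract (X Y : C) : Prop := ∃ (i : X ⟶ Y) (r : Y ⟶ X), i ≫ r = 𝟙 X

/-- `S^{⊥_I}`: the objects `X` such that `Hom(A, X⟦n⟧) = 0` for all `A ∈ S` and `n ∈ I`. -/
def perpSet (S : Set C) (I : Set ℤ) : Set C :=
  {X : C | ∀ A ∈ S, ∀ n ∈ I, ∀ f : A ⟶ (X⟦n⟧), f = 0}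

/-- `S^⊥ = Ker Hom(S, -)`. -/
def perp (S : Set C) : Set C := {X : C | ∀ A ∈ S, ∀ f : A ⟶ X, f = 0}

/-- `^⊥S = Ker Hom(-, S)`. -/
def leftPerp (S : Set C) : Set C := {X : C | ∀ A ∈ S, ∀ f : X ⟶ A, f = 0}

/-- `T^{⊥_{>0}}`. -/
def objPerpGT (T : C) : Set C := perpSet {T} {n : ℤ | 0 < n}

/-- `T^{⊥_{≤0}}`. -/
def objPerpLE (T : C) : Set C := perpSet {T} {n : ℤ | n ≤ 0}

/-- `T^{⊥_ℤ}`. -/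
def objPerpZ (T : C) : Set C := perpSet {T} (Set.univ : Set ℤ)

/-- Closure under direct summands. -/
def SummandClosed (S : Set C) : Prop := ∀ ⦃X Y : C⦄, IsRetract X Y → Y ∈ S → X ∈ S

/-- Closure under isomorphisms. -/
def IsoClosed (S : Set C) : Prop := ∀ ⦃X Y : C⦄, (X ≅ Y) → X ∈ S → Y ∈ S

/-- A torsion pair `(V, W)` in a triangulated category. -/
structure IsTorsionPair (V W : Set C) : Prop where
  summand_left : SummandClosed V
  summand_right : SummandClosed W
  hom_zero : ∀ ⦃A B : C⦄, A ∈ V → B ∈ W → ∀ f : A ⟶ B, f = 0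
  exists_triangle : ∀ X : C, ∃ (A B : C) (_ : A ∈ V) (_ : B ∈ W)
    (f : A ⟶ X) (g : X ⟶ B) (h : B ⟶ (A⟦(1 : ℤ)⟧)), Triangle.mk f g h ∈ distTriang C

/-- Closure under extensions. -/
def ExtensionClosed (S : Set C) : Prop :=
  ∀ T : Triangle C, T ∈ (distTriang C) → T.obj₁ ∈ S → T.obj₃ ∈ S → T.obj₂ ∈ S

/-- Closure under positive shifts. -/
def ShiftClosedPos (S : Set C) : Prop := ∀ ⦃X : C⦄, X ∈ S → (X⟦(1 : ℤ)⟧) ∈ S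

/-- A suspended subcategory: closed under isomorphisms, extensions and positive shifts. -/
def Suspended (S : Set C) : Prop := IsoClosed S ∧ ExtensionClosed S ∧ ShiftClosedPos S

/-- A t-structure: a torsion pair whose left class is suspended. -/
def IsTStructure (V W : Set C) : Prop := IsTorsionPair V W ∧ Suspended V

/-- A co-t-structure: a torsion pair whose right class is suspended. -/
def IsCoTStructure (V W : Set C) : Prop := IsTorsionPair V W ∧ Suspended W

/-- A TTF triple. -/
structure IsTTF (U V W : Set C) : Prop where
  tp₁ : IsTorsionPair U V
  tp₂ : IsTorsionPair V W

/-- A suspended TTF triple. -/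
def SuspendedTTF (U V W : Set C) : Prop := IsTTF U V W ∧ Suspended V

/-- The coheart `U⟦1⟧ ∩ V` of a co-t-structure `(U, V)`. -/
def Coheart (U V : Set C) : Set C := {X : C | (X⟦(-1 : ℤ)⟧) ∈ U} ∩ V

/-- `∩_{n ∈ ℤ} V⟦n⟧ = 0`. -/
def LeftNondegenerate (V : Set C) : Prop := ∀ X : C, (∀ n : ℤ, (X⟦n⟧) ∈ V) → IsZero X

/-- `∩_{n ∈ ℤ} W⟦n⟧ = 0`. -/
def RightNondegenerate (W : Set C) : Prop := ∀ X : C, (∀ n : ℤ, (X⟦n⟧) ∈ W) → IsZero X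

/-- Closure under (small) coproducts, phrased via colimit cofans. -/
def CoprodClosed (S : Set C) : Prop :=
  ∀ ⦃ι : Type v⦄ (f : ι → C) (c : Cofan f), IsColimit c → (∀ i, f i ∈ S) → c.pt ∈ S

/-- A localising subcategory: a triangulated subcategory closed under coproducts. -/
structure IsLocalising (S : Set C) : Prop where
  iso : IsoClosed S
  zero : ∀ X : C, IsZero X → X ∈ S
  shift : ∀ (n : ℤ) ⦃X : C⦄, X ∈ S → (X⟦n⟧) ∈ S
  ext : ExtensionClosed S
  coprod : CoprodClosed S

/-- `Loc S`: the smallest localising subcategory containing `S`. -/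
def Loc (A : Set C) : Set C := ⋂₀ {S : Set C | IsLocalising S ∧ A ⊆ S}

/-- A thick subcategory: a triangulated subcategory closed under direct summands. -/
structure IsThick (S : Set C) : Prop where
  iso : IsoClosed S
  zero : ∀ X : C, IsZero X → X ∈ S
  shift : ∀ (n : ℤ) ⦃X : C⦄, X ∈ S → (X⟦n⟧) ∈ S
  ext : ExtensionClosed S
  summand : SummandClosed S

/-- `Thick S`: the smallest thick subcategory containing `S`. -/
def Thick (A : Set C) : Set C := ⋂₀ {S : Set C | IsThick S ∧ A ⊆ S}

/-- `Susp S`: the smallest cocomplete suspended subcategory containing `S`. -/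
def SuspClosure (A : Set C) : Set C :=
  ⋂₀ {S : Set C | Suspended S ∧ CoprodClosed S ∧ A ⊆ S}

/-- A subcategory is coreflective if its inclusion functor admits a right adjoint. -/
def Coreflective (S : Set C) : Prop :=
  ∃ G : C ⥤ CategoryTheory.ObjectProperty.FullSubcategory (fun X : C => X ∈ S),
    Nonempty (CategoryTheory.ObjectProperty.ι (fun X : C => X ∈ S) ⊣ G)

/-- A smashing subcategory: a coreflective localising subcategory `S` such that `S^⊥` is
closed under coproducts. -/
def Smashing (S : Set C) : Prop := IsLocalising S ∧ Coreflective S ∧ CoprodClosed (perp S)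

/-- An aisle: a suspended coreflective subcategory. -/
def IsAisle (S : Set C) : Prop := Suspended S ∧ Coreflective S

/-- A compact object: `Hom(X, -)` commutes with (small) coproducts. -/
def IsCompactObj (X : C) : Prop :=
  ∀ ι : Type v, Nonempty (PreservesColimitsOfShape (Discrete ι) (coyoneda.obj (op X)))

/-- `U_T := ^⊥(T^{⊥_{≤0}})`. -/
def USet (T : C) : Set C := leftPerp (objPerpLE T)

/-- A partial silting object. -/
structure IsPartialSilting (T : C) : Prop where
  ps1 : IsTorsionPair (USet T) (objPerpLE T)
  ps2 : USet T ⊆ objPerpGT T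
  ps3 : CoprodClosed (objPerpGT T)

/-- A silting object: `(T^{⊥_{>0}}, T^{⊥_{≤0}})` is a t-structure. -/
def IsSilting (T : C) : Prop := IsTStructure (objPerpGT T) (objPerpLE T)

/-- `Add X`: direct summands of coproducts of copies of `X`. -/
def AddClosure (X : C) : Set C :=
  {Y : C | ∃ (ι : Type v) (c : Cofan (fun _ : ι => X)),
    Nonempty (IsColimit c) ∧ IsRetract Y c.pt}

/-- A torsion pair in the triangulated subcategory determined by the class `L` of objects. -/
structure IsTorsionPairIn (L V W : Set C) : Prop where
  subset_left : V ⊆ L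
  subset_right : W ⊆ L
  summand_left : ∀ ⦃X Y : C⦄, X ∈ L → IsRetract X Y → Y ∈ V → X ∈ V
  summand_right : ∀ ⦃X Y : C⦄, X ∈ L → IsRetract X Y → Y ∈ W → X ∈ W
  hom_zero : ∀ ⦃A B : C⦄, A ∈ V → B ∈ W → ∀ f : A ⟶ B, f = 0
  exists_triangle : ∀ X ∈ L, ∃ (A B : C) (_ : A ∈ V) (_ : B ∈ W)
    (f : A ⟶ X) (g : X ⟶ B) (h : B ⟶ (A⟦(1 : ℤ)⟧)), Triangle.mk f g h ∈ distTriang C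

/-- A t-structure in the triangulated subcategory determined by `L`. -/
structure IsTStructureIn (L V W : Set C) : Prop where
  tp : IsTorsionPairIn L V W
  iso_left : ∀ ⦃X Y : C⦄, (X ≅ Y) → X ∈ V → Y ∈ L → Y ∈ V
  ext_left : ∀ T : Triangle C, T ∈ (distTriang C) →
    T.obj₁ ∈ V → T.obj₃ ∈ V → T.obj₂ ∈ L → T.obj₂ ∈ V
  shift_left : ∀ ⦃X : C⦄, X ∈ V → (X⟦(1 : ℤ)⟧) ∈ V

/-- `T` is a silting object of the triangulated subcategory determined by `L`. -/
def IsSiltingIn (L : Set C) (T : C) : Prop :=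
  T ∈ L ∧ IsTStructureIn L (L ∩ objPerpGT T) (L ∩ objPerpLE T)

/-- Left perpendicular computed inside `L`. -/
def leftPerpIn (L S : Set C) : Set C := {X : C | X ∈ L ∧ ∀ A ∈ S, ∀ f : X ⟶ A, f = 0}

/-- Closure under coproducts, relative to `L`. -/
def CoprodClosedIn (L S : Set C) : Prop :=
  ∀ ⦃ι : Type v⦄ (f : ι → C) (c : Cofan f), IsColimit c → (∀ i, f i ∈ S) →
    c.pt ∈ L → c.pt ∈ S

/-- `T` is a partial silting object of the triangulated subcategory determined by `L`. -/
def IsPartialSiltingIn (L : Set C) (T : C) : Prop :=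
  T ∈ L ∧
  IsTorsionPairIn L (leftPerpIn L (L ∩ objPerpLE T)) (L ∩ objPerpLE T) ∧
  leftPerpIn L (L ∩ objPerpLE T) ⊆ objPerpGT T ∧
  CoprodClosedIn L (L ∩ objPerpGT T)

section WellGenerated

variable [HasCoproducts.{v} C]

/-- An `α`-small object. -/
def AlphaSmall (α : Cardinal.{v}) (X : C) : Prop :=
  ∀ ⦃ι : Type v⦄ (Y : ι → C) (h : X ⟶ ∐ Y),
    ∃ (Ω : Set ι) (g : X ⟶ ∐ fun ω : Ω => Y ω),
      Cardinal.mk Ω < α ∧ g ≫ Sigma.desc (fun ω : Ω => Sigma.ι Y ω.1) = h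

variable (C)

/-- A well generated triangulated category. -/
def WellGenerated : Prop :=
  ∃ α : Cardinal.{v}, α.IsRegular ∧ ∃ S : Set C,
    (∀ X ∈ perpSet S (Set.univ : Set ℤ), IsZero X) ∧
    (∀ ⦃ι : Type v⦄ (X Y : ι → C) (g : ∀ i, X i ⟶ Y i),
      (∀ i, ∀ G ∈ S, Function.Surjective fun f : G ⟶ X i => f ≫ g i) →
      ∀ G ∈ S, Function.Surjective fun f : G ⟶ ∐ X => f ≫ Limits.Sigma.map g) ∧
    (∀ G ∈ S, AlphaSmall α G)

end WellGenerated

section Brown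

/-- A contravariant cohomological functor. -/
def IsCohomologicalContra (H : Cᵒᵖ ⥤ AddCommGrpCat.{v}) : Prop :=
  ∀ T : Triangle C, T ∈ (distTriang C) →
    Function.Exact (H.map T.mor₂.op) (H.map T.mor₁.op)

/-- `H` sends coproducts to products. -/
def SendsCoproductsToProducts (H : Cᵒᵖ ⥤ AddCommGrpCat.{v}) : Prop :=
  ∀ ⦃ι : Type v⦄ (Y : ι → C) (c : Cofan Y), IsColimit c →
    Function.Bijective (fun (x : H.obj (op c.pt)) (i : ι) => H.map (c.inj i).op x)

/-- `H` is representable, i.e. naturally isomorphic to `Hom(-, X)` for some `X`. -/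
def RepresentableContra (H : Cᵒᵖ ⥤ AddCommGrpCat.{v}) : Prop :=
  ∃ (X : C) (e : ∀ Y : C, (Y ⟶ X) ≃ H.obj (op Y)),
    ∀ ⦃Y Z : C⦄ (f : Y ⟶ Z) (g : Z ⟶ X), e Y (f ≫ g) = H.map f.op (e Z g)

/-- A covariant cohomological functor. -/
def IsCohomologicalCov (H : C ⥤ AddCommGrpCat.{v}) : Prop :=
  ∀ T : Triangle C, T ∈ (distTriang C) →
    Function.Exact (H.map T.mor₁) (H.map T.mor₂)

/-- `H` sends products to products. -/
def SendsProductsToProducts (H : C ⥤ AddCommGrpCat.{v}) : Prop :=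
  ∀ ⦃ι : Type v⦄ (Y : ι → C) (c : Fan Y), IsLimit c →
    Function.Bijective (fun (x : H.obj c.pt) (i : ι) => H.map (c.proj i) x)

/-- `H` is corepresentable, i.e. naturally isomorphic to `Hom(X, -)` for some `X`. -/
def CorepresentableCov (H : C ⥤ AddCommGrpCat.{v}) : Prop :=
  ∃ (X : C) (e : ∀ Y : C, (X ⟶ Y) ≃ H.obj Y),
    ∀ ⦃Y Z : C⦄ (f : Y ⟶ Z) (g : X ⟶ Y), e Z (g ≫ f) = H.map f (e Y g)

variable (C)

/-- Brown representability. -/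
def BrownRepresentability : Prop :=
  ∀ H : Cᵒᵖ ⥤ AddCommGrpCat.{v}, IsCohomologicalContra H →
    SendsCoproductsToProducts H → RepresentableContra H

/-- Dual Brown representability: the category is complete and every covariant cohomological
functor sending products to products is corepresentable. -/
def DualBrownRepresentability : Prop :=
  HasProducts.{v} C ∧
  ∀ H : C ⥤ AddCommGrpCat.{v}, IsCohomologicalCov H →
    SendsProductsToProducts H → CorepresentableCov H

end Brown

end PaperSmashing

/-!
Fix `X` and `I ⊆ ℤ`. The objects `Y` with `Hom(Y, X⟦n⟧) = 0` for all `n ∈ I` form a class closed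
under isomorphisms, extensions and coproducts, and under `⟦m⟧` whenever `I - m ⊆ I`: for
`I = {n ≤ 0}` it is a cocomplete suspended class, for `I = ℤ` a localising one. If it contains `S`
it therefore contains `Susp(S)`, resp. `Loc(S)`, which gives `S^{⊥_I} ⊆ Susp(S)^⊥`, resp.
`Loc(S)^⊥`. Conversely `Hom(A, X⟦n⟧) ≅ Hom(A⟦-n⟧, X)`, and `A⟦-n⟧` lies in `Susp(S)` for `A ∈ S`
and `n ≤ 0`, in `Loc(S)` for all `n`. The last two claims are `L ⊆ ^⊥(L^⊥)`.
-/

namespace PaperSmashing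

open CategoryTheory CategoryTheory.Limits CategoryTheory.Pretriangulated

universe v u

lemma forall_shift_hom_eq_zero_iff {C : Type u} [Category.{v} C] [HasShift C ℤ] [Preadditive C]
    [∀ n : ℤ, (shiftFunctor C n).Additive] {A B : C} {m n : ℤ} (h : m + n = 0) :
    (∀ f : A⟦m⟧ ⟶ B, f = 0) ↔ ∀ g : A ⟶ B⟦n⟧, g = 0 := by
  let adj : shiftFunctor C m ⊣ shiftFunctor C n := (shiftEquiv' C m n h).toAdjunction
  constructor
  · intro hA g
    rw [← (adj.homEquiv A B).apply_symm_apply g, Adjunction.homEquiv_unit,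
      hA ((adj.homEquiv A B).symm g), Functor.map_zero, comp_zero]
  · intro hB f
    rw [← (adj.homEquiv A B).symm_apply_apply f, Adjunction.homEquiv_counit,
      hB (adj.homEquiv A B f), Functor.map_zero, zero_comp]

section LeftPerpShifts

variable {C : Type u} [Category.{v} C] [HasShift C ℤ] [Preadditive C]

/-- `^⊥{X⟦n⟧ | n ∈ I}`. -/
def leftPerpShifts (X : C) (I : Set ℤ) : Set C := {Y : C | ∀ n ∈ I, ∀ f : Y ⟶ (X⟦n⟧), f = 0}

lemma isoClosed_leftPerpShifts (X : C) (I : Set ℤ) : IsoClosed (leftPerpShifts X I) :=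
  fun _ _ e hY n hn f => (cancel_epi e.hom).1 (by rw [comp_zero]; exact hY n hn _)

lemma coprodClosed_leftPerpShifts (X : C) (I : Set ℤ) : CoprodClosed (leftPerpShifts X I) :=
  fun _ _ _ hc hf n hn g =>
    Cofan.IsColimit.hom_ext hc _ _ fun i => by rw [comp_zero]; exact hf i n hn _

lemma zero_mem_leftPerpShifts (X : C) (I : Set ℤ) {Y : C} (hY : IsZero Y) :
    Y ∈ leftPerpShifts X I :=
  fun _ _ f => hY.eq_of_src f 0

lemma hom_eq_zero_of_mem_leftPerpShifts {X Y : C} {I : Set ℤ} (h0 : (0 : ℤ) ∈ I)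
    (hY : Y ∈ leftPerpShifts X I) (f : Y ⟶ X) : f = 0 :=
  (cancel_mono ((shiftFunctorZero C ℤ).inv.app X)).1 (by rw [zero_comp]; exact hY 0 h0 _)

lemma shift_mem_leftPerpShifts [∀ n : ℤ, (shiftFunctor C n).Additive] {X Y : C} {I : Set ℤ}
    {m : ℤ} (hI : ∀ n ∈ I, n - m ∈ I) (hY : Y ∈ leftPerpShifts X I) :
    (Y⟦m⟧) ∈ leftPerpShifts X I := by
  intro n hn
  rw [forall_shift_hom_eq_zero_iff (add_neg_cancel m)]
  intro g
  let e := (shiftFunctorAdd' C n (-m) (n - m) (by ring)).symm.app X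
  exact (cancel_mono e.hom).1 (by rw [zero_comp]; exact hY _ (hI n hn) _)

lemma perp_eq_perpSet [∀ n : ℤ, (shiftFunctor C n).Additive] (S : Set C) {L : Set C}
    {I : Set ℤ} (h0 : (0 : ℤ) ∈ I)
    (hshift : ∀ A ∈ S, ∀ n ∈ I, (A⟦-n⟧) ∈ L)
    (hmin : ∀ X : C, S ⊆ leftPerpShifts X I → L ⊆ leftPerpShifts X I) :
    perp L = perpSet S I := by
  ext X
  constructor
  · intro hX A hA n hn
    exact (forall_shift_hom_eq_zero_iff (neg_add_cancel n)).1 (hX _ (hshift A hA n hn))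
  · intro hX A hA
    exact hom_eq_zero_of_mem_leftPerpShifts h0 (hmin X hX hA)

end LeftPerpShifts

section Triangulated

variable {C : Type u} [Category.{v} C] [HasZeroObject C] [HasShift C ℤ] [Preadditive C]
  [∀ n : ℤ, (shiftFunctor C n).Additive] [Pretriangulated C]

lemma extensionClosed_leftPerpShifts (X : C) (I : Set ℤ) :
    ExtensionClosed (leftPerpShifts X I) := by
  intro T hT h₁ h₃ n hn f
  obtain ⟨g, rfl⟩ := Triangle.yoneda_exact₂ T hT f (h₁ n hn _)
  rw [h₃ n hn g, comp_zero]

lemma suspended_leftPerpShifts_nonpos (X : C) : Suspended (leftPerpShifts X {n : ℤ | n ≤ 0}) :=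
  ⟨isoClosed_leftPerpShifts X _, extensionClosed_leftPerpShifts X _,
    fun _ => shift_mem_leftPerpShifts fun n (hn : n ≤ 0) => show n - 1 ≤ 0 by omega⟩

lemma isLocalising_leftPerpShifts_univ (X : C) : IsLocalising (leftPerpShifts X Set.univ) where
  iso := isoClosed_leftPerpShifts X _
  zero _ := zero_mem_leftPerpShifts X _
  shift _ _ := shift_mem_leftPerpShifts fun _ _ => Set.mem_univ _
  ext := extensionClosed_leftPerpShifts X _
  coprod := coprodClosed_leftPerpShifts X _

lemma Suspended.shift_mem {T : Set C} (hT : Suspended T) {A : C} (hA : A ∈ T) {k : ℤ}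
    (hk : 0 ≤ k) : (A⟦k⟧) ∈ T := by
  induction k, hk using Int.leInduction with
  | base => exact hT.1 ((shiftFunctorZero C ℤ).symm.app A) hA
  | succ k _ ih => exact hT.1 ((shiftFunctorAdd' C k 1 (k + 1) rfl).symm.app A) (hT.2.2 ih)

variable (S : Set C)

lemma subset_suspClosure : S ⊆ SuspClosure S := fun _ hA _ hT => hT.2.2 hA

lemma suspClosure_subset {T : Set C} (hT : Suspended T) (hT' : CoprodClosed T) (hS : S ⊆ T) :
    SuspClosure S ⊆ T :=
  Set.sInter_subset_of_mem ⟨hT, hT', hS⟩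

lemma suspended_suspClosure : Suspended (SuspClosure S) :=
  ⟨fun _ _ e hX T hT => hT.1.1 e (hX T hT),
    fun _ hTr h₁ h₃ T hT => hT.1.2.1 _ hTr (h₁ T hT) (h₃ T hT),
    fun _ hX T hT => hT.1.2.2 (hX T hT)⟩

lemma subset_loc : S ⊆ Loc S := fun _ hA _ hT => hT.2 hA

lemma loc_subset {T : Set C} (hT : IsLocalising T) (hS : S ⊆ T) : Loc S ⊆ T :=
  Set.sInter_subset_of_mem ⟨hT, hS⟩

lemma shift_mem_loc {A : C} (hA : A ∈ Loc S) (n : ℤ) : (A⟦n⟧) ∈ Loc S :=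
  fun T hT => hT.1.shift n (hA T hT)

lemma perp_suspClosure : perp (SuspClosure S) = perpSet S {n : ℤ | n ≤ 0} :=
  perp_eq_perpSet S (le_refl 0 : (0 : ℤ) ≤ 0)
    (fun _ hA n (hn : n ≤ 0) =>
      (suspended_suspClosure S).shift_mem (subset_suspClosure S hA) (by omega))
    fun X => suspClosure_subset S (suspended_leftPerpShifts_nonpos X)
      (coprodClosed_leftPerpShifts X _)

lemma perp_loc : perp (Loc S) = perpSet S Set.univ :=
  perp_eq_perpSet S (Set.mem_univ 0)
    (fun _ hA n _ => shift_mem_loc S (subset_loc S hA) (-n))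
    fun X => loc_subset S (isLocalising_leftPerpShifts_univ X)

end Triangulated

lemma subset_leftPerp_perp {C : Type u} [Category.{v} C] [Preadditive C] (T : Set C) :
    T ⊆ leftPerp (perp T) :=
  fun _ hY _ hX f => hX _ hY f

/-- For a set of objects `S` of a triangulated category with coproducts:
`Susp(S)^⊥ = S^{⊥_{≤0}}`, `Loc(S)^⊥ = S^{⊥_ℤ}`, and consequently
`Susp(S) ⊆ ^⊥(S^{⊥_{≤0}})` and `Loc(S) ⊆ ^⊥(S^{⊥_ℤ})`. -/
theorem statement_16 {C : Type u} [Category.{v} C] [HasZeroObject C] [HasShift C ℤ]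
    [Preadditive C] [∀ n : ℤ, (CategoryTheory.shiftFunctor C n).Additive] [Pretriangulated C]
    [HasCoproducts.{v} C] (S : Set C) :
    perp (SuspClosure S) = perpSet S {n : ℤ | n ≤ 0} ∧
    perp (Loc S) = perpSet S (Set.univ : Set ℤ) ∧
    SuspClosure S ⊆ leftPerp (perpSet S {n : ℤ | n ≤ 0}) ∧
    Loc S ⊆ leftPerp (perpSet S (Set.univ : Set ℤ)) :=
  ⟨perp_suspClosure S, perp_loc S, perp_suspClosure S ▸ subset_leftPerp_perp _,
    perp_loc S ▸ subset_leftPerp_perp _⟩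

end PaperSmashing
end

section
/- Let T be a well generated triangulated category satisfying dual Brown representability and let T be a partial silting object of T. Then the coheart of the co-t-structure (^⊥(T^{⊥_{>0}}), T^{⊥_{>0}}), namely ^⊥(T^{⊥_{>0}})[1] ∩ T^{⊥_{>0}}, equals Add(T), the class of direct summands of coproducts of copies of T. -/
/-!
Common definitions for formalising "Partial silting objects and smashing subcategories"
by Angeleri Hügel, Marks, Vitória.
-/

namespace PaperSmashing

open CategoryTheory CategoryTheory.Limits CategoryTheory.Pretriangulated Opposite

universe v u

variable (C : Type u) [Category.{v} C] [HasZeroObject C] [HasShift C ℤ] [Preadditive C]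
  [∀ n : ℤ, (CategoryTheory.shiftFunctor C n).Additive] [Pretriangulated C]

variable {C}

/-!
`T` lies in `U_T ⊆ T^{⊥_{>0}}`, and `T^{⊥_{>0}}` is closed under coproducts and summands,
so `Add T ⊆ T^{⊥_{>0}}`; moreover `Hom(Add T, Z⟦1⟧) = 0` for `Z ∈ T^{⊥_{>0}}`, i.e.
`(Add T)⟦-1⟧ ⊆ ^⊥(T^{⊥_{>0}})`. Conversely, for `X` in the coheart complete the canonical
map `∐_{Hom(T, X)} T ⟶ X` to a triangle with cone `Z`. Since this map is surjective on
`Hom(T, -)` and both `∐ T` and `X` lie in `T^{⊥_{>0}}`, the long exact sequence gives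
`Z⟦-1⟧ ∈ T^{⊥_{>0}}`. Hence `X ⟶ Z` vanishes and `X` is a summand of `∐ T`.
-/

set_option linter.unusedSectionVars false

lemma perpSet_summandClosed (S : Set C) (I : Set ℤ) : SummandClosed (perpSet S I) := by
  rintro X Y ⟨i, r, hir⟩ hY A hA n hn f
  have hf : f = (f ≫ i⟦n⟧') ≫ r⟦n⟧' := by
    rw [Category.assoc, ← Functor.map_comp, hir, CategoryTheory.Functor.map_id, Category.comp_id]
  rw [hf, hY A hA n hn (f ≫ i⟦n⟧'), zero_comp]

lemma shift_mem_perpSet {S : Set C} {I J : Set ℤ} {Z : C} {a : ℤ} (hZ : Z ∈ perpSet S I)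
    (hIJ : ∀ n ∈ J, a + n ∈ I) : Z⟦a⟧ ∈ perpSet S J := fun A hA n hn f =>
  (Preadditive.IsIso.comp_right_eq_zero f ((shiftFunctorAdd' C a n (a + n) rfl).inv.app Z)).mp
    (hZ A hA (a + n) (hIJ n hn) _)

lemma shift_neg_mem_leftPerp {S : Set C} {Y : C} {n : ℤ}
    (h : ∀ Z ∈ S, ∀ f : Y ⟶ Z⟦n⟧, f = 0) : Y⟦-n⟧ ∈ leftPerp S := by
  intro Z hZ g
  rw [← (shiftFunctor C n).map_eq_zero_iff,
    ← Preadditive.IsIso.comp_left_eq_zero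
      ((shiftFunctorCompIsoId C (-n) n (neg_add_cancel n)).inv.app Y)]
  exact h Z hZ _

lemma hom_shift_one_eq_zero_of_mem_objPerpGT {T Z : C} (hZ : Z ∈ objPerpGT T)
    (f : T ⟶ Z⟦(1 : ℤ)⟧) : f = 0 :=
  hZ T rfl 1 (show (0 : ℤ) < 1 from one_pos) f

lemma self_mem_leftPerp_objPerpLE (T : C) : T ∈ leftPerp (objPerpLE T) := fun Z hZ f =>
  (Preadditive.IsIso.comp_right_eq_zero f ((shiftFunctorZero C ℤ).inv.app Z)).mp
    (hZ T rfl 0 (show (0 : ℤ) ≤ 0 from le_rfl) _)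

lemma hom_eq_zero_of_mem_addClosure {T Y W : C} (hY : Y ∈ AddClosure T)
    (h : ∀ f : T ⟶ W, f = 0) (f : Y ⟶ W) : f = 0 := by
  obtain ⟨ι, c, ⟨hc⟩, i, r, hir⟩ := hY
  have hr : r ≫ f = 0 := Cofan.IsColimit.hom_ext hc _ _ fun j => by rw [comp_zero]; exact h _
  rw [← Category.id_comp f, ← hir, Category.assoc, hr, comp_zero]

lemma isRetract_obj₂_obj₁_of_mor₂_eq_zero {Tr : Triangle C} (hTr : Tr ∈ distTriang C)
    (h : Tr.mor₂ = 0) : IsRetract Tr.obj₂ Tr.obj₁ := by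
  obtain ⟨s, hs⟩ := Triangle.coyoneda_exact₂ Tr hTr (𝟙 Tr.obj₂) (by rw [h, comp_zero])
  exact ⟨s, Tr.mor₁, hs.symm⟩

lemma obj₃_mem_perpSet_nonneg {T : C} {Tr : Triangle C} (hTr : Tr ∈ distTriang C)
    (h₁ : Tr.obj₁ ∈ objPerpGT T) (h₂ : Tr.obj₂ ∈ objPerpGT T)
    (hsurj : ∀ v : T ⟶ Tr.obj₂, ∃ w, v = w ≫ Tr.mor₁) :
    Tr.obj₃ ∈ perpSet {T} {n : ℤ | 0 ≤ n} := by
  intro A hA k (hk : 0 ≤ k) u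
  rw [Set.mem_singleton_iff] at hA
  subst A
  rcases hk.eq_or_lt with rfl | hkpos
  · rw [← Preadditive.IsIso.comp_right_eq_zero u ((shiftFunctorZero C ℤ).hom.app Tr.obj₃)]
    obtain ⟨v, hv⟩ := Triangle.coyoneda_exact₃ Tr hTr
      (u ≫ (shiftFunctorZero C ℤ).hom.app _) (hom_shift_one_eq_zero_of_mem_objPerpGT h₁ _)
    obtain ⟨w, rfl⟩ := hsurj v
    rw [hv, Category.assoc, comp_distTriang_mor_zero₁₂ Tr hTr, comp_zero]
  · have h₁k : Tr.obj₁⟦k⟧ ∈ objPerpGT T :=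
      shift_mem_perpSet h₁ fun n (hn : 0 < n) => show 0 < k + n by omega
    obtain ⟨v, hv⟩ := Triangle.coyoneda_exact₃ _ (Triangle.shift_distinguished Tr hTr k) u
      (hom_shift_one_eq_zero_of_mem_objPerpGT h₁k _)
    obtain rfl : v = 0 := h₂ T rfl k hkpos v
    rw [hv]
    exact zero_comp

namespace IsPartialSilting

lemma self_mem_objPerpGT {T : C} (hT : IsPartialSilting T) : T ∈ objPerpGT T :=
  hT.ps2 (self_mem_leftPerp_objPerpLE T)

lemma cofan_pt_mem_objPerpGT {T : C} (hT : IsPartialSilting T) {ι : Type v}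
    {c : Cofan fun _ : ι => T} (hc : IsColimit c) : c.pt ∈ objPerpGT T :=
  hT.ps3 _ c hc fun _ => hT.self_mem_objPerpGT

lemma addClosure_subset_coheart {T : C} (hT : IsPartialSilting T) :
    AddClosure T ⊆ Coheart (leftPerp (objPerpGT T)) (objPerpGT T) := by
  intro Y hY
  refine ⟨shift_neg_mem_leftPerp fun Z hZ =>
    hom_eq_zero_of_mem_addClosure hY (hom_shift_one_eq_zero_of_mem_objPerpGT hZ), ?_⟩
  obtain ⟨ι, c, ⟨hc⟩, hYc⟩ := hY
  exact perpSet_summandClosed _ _ hYc (hT.cofan_pt_mem_objPerpGT hc)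

lemma coheart_subset_addClosure [HasCoproducts.{v} C] {T : C} (hT : IsPartialSilting T) :
    Coheart (leftPerp (objPerpGT T)) (objPerpGT T) ⊆ AddClosure T := by
  rintro X ⟨hX₁, hX₂⟩
  let p : (∐ fun _ : (T ⟶ X) => T) ⟶ X := Sigma.desc fun f => f
  obtain ⟨Z, g, h, hTr⟩ := distinguished_cocone_triangle p
  have hA : (∐ fun _ : (T ⟶ X) => T) ∈ objPerpGT T :=
    hT.cofan_pt_mem_objPerpGT (coproductIsCoproduct _)
  have hsurj : ∀ v : T ⟶ X, ∃ w, v = w ≫ p := fun v =>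
    ⟨Sigma.ι (fun _ : (T ⟶ X) => T) v, (Sigma.ι_desc (fun f : T ⟶ X => f) v).symm⟩
  have hZ : Z⟦(-1 : ℤ)⟧ ∈ objPerpGT T :=
    shift_mem_perpSet (obj₃_mem_perpSet_nonneg hTr hA hX₂ hsurj)
      fun n (hn : 0 < n) => show 0 ≤ -1 + n by omega
  have hg : g = 0 := (shiftFunctor C (-1 : ℤ)).map_eq_zero_iff.mp (hX₁ _ hZ _)
  exact ⟨_, _, ⟨coproductIsCoproduct _⟩, isRetract_obj₂_obj₁_of_mor₂_eq_zero hTr hg⟩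

end IsPartialSilting

/-- For a partial silting object `T` of a well generated triangulated
category satisfying dual Brown representability, the coheart of the co-t-structure
`(^⊥(T^{⊥_{>0}}), T^{⊥_{>0}})` equals `Add T`. -/
theorem statement_17 {C : Type u} [Category.{v} C] [HasZeroObject C] [HasShift C ℤ]
    [Preadditive C] [∀ n : ℤ, (CategoryTheory.shiftFunctor C n).Additive] [Pretriangulated C]
    [HasCoproducts.{v} C]
    (hWG : WellGenerated C) (hDB : DualBrownRepresentability C)
    (T : C) (hT : IsPartialSilting T) :
    Coheart (leftPerp (objPerpGT T)) (objPerpGT T) = AddClosure T :=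
  hT.coheart_subset_addClosure.antisymm hT.addClosure_subset_coheart

end PaperSmashing
end
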